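/- arXiv:2409.01973 — 3 statements merged into one kernel-verified Lean document; each statement's English description precedes it below -/
import Mathlib

section
/- Let M be a real symmetric positive definite m×m matrix, L a real m×n matrix, and N a real symmetric negative definite n×n matrix. Then the block matrix [[M, L], [Lᵀ, N]] is invertible, and for every real m×k matrix θ and every real n×k matrix ξ, the symmetric k×k matrix θᵀ M⁻¹ θ − [θᵀ, ξᵀ] · [[M, L], [Lᵀ, N]]⁻¹ · [θ; ξ] is positive semidefinite. -/
/-!
The Schur complement `P = Lᵀ M⁻¹ L - N` of `M` is positive definite, being `-N` plus the
positive semidefinite `Lᵀ M⁻¹ L`; so the block matrix is invertible, and the block inversion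
formula turns `θᵀ M⁻¹ θ - [θᵀ, ξᵀ] B⁻¹ [θ; ξ]` into `wᵀ P⁻¹ w` with `w = Lᵀ M⁻¹ θ - ξ`.
-/

open Matrix

namespace Matrix

section CommRing

variable {ι κ m n α : Type*} [Fintype m] [Fintype n] [DecidableEq m] [DecidableEq n]
  [CommRing α]

theorem inv_neg (A : Matrix n n α) : (-A)⁻¹ = -A⁻¹ := by
  by_cases hA : IsUnit A.det
  · exact inv_eq_left_inv (by rw [neg_mul_neg, nonsing_inv_mul A hA])
  · have hnA : ¬IsUnit (-A).det := by simpa [det_neg, IsUnit.mul_iff] using fun _ ↦ hA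
    rw [nonsing_inv_apply_not_isUnit _ hA, nonsing_inv_apply_not_isUnit _ hnA, neg_zero]

theorem isUnit_fromBlocks_of_isUnit_of_isUnit_sub {A : Matrix m m α} {B : Matrix m n α}
    {C : Matrix n m α} {D : Matrix n n α} (hA : IsUnit A) (hS : IsUnit (C * A⁻¹ * B - D)) :
    IsUnit (fromBlocks A B C D) := by
  have := hA.invertible
  rw [isUnit_fromBlocks_iff_of_invertible₁₁, invOf_eq_nonsing_inv, ← neg_sub]
  exact hS.neg

theorem mul_inv_mul_sub_fromCols_mul_inv_fromBlocks_mul_fromRows {A : Matrix m m α}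
    {B : Matrix m n α} {C : Matrix n m α} {D : Matrix n n α} (hA : IsUnit A)
    (hS : IsUnit (C * A⁻¹ * B - D)) (x : Matrix ι m α) (y : Matrix ι n α)
    (c : Matrix m κ α) (d : Matrix n κ α) :
    x * A⁻¹ * c - fromCols x y * (fromBlocks A B C D)⁻¹ * fromRows c d =
      (x * A⁻¹ * B - y) * (C * A⁻¹ * B - D)⁻¹ * (C * A⁻¹ * c - d) := by
  have := hA.invertible
  have hS' : IsUnit (D - C * ⅟A * B) := by
    rw [invOf_eq_nonsing_inv, ← neg_sub]
    exact hS.neg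
  have := hS'.invertible
  have := fromBlocks₁₁Invertible A B C D
  rw [← invOf_eq_nonsing_inv (fromBlocks A B C D), invOf_fromBlocks₁₁_eq,
    fromCols_mul_fromBlocks, fromCols_mul_fromRows]
  simp only [invOf_eq_nonsing_inv]
  rw [← neg_sub (C * A⁻¹ * B) D, inv_neg]
  simp only [Matrix.mul_sub, Matrix.sub_mul, Matrix.mul_add, Matrix.add_mul, Matrix.neg_mul,
    Matrix.mul_neg, Matrix.mul_assoc]
  abel

end CommRing

theorem PosDef.conjTranspose_mul_inv_mul_sub {m n K : Type*} [Fintype m] [DecidableEq m]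
    [Finite n] [Field K] [PartialOrder K] [StarRing K] [AddLeftMono K] {M : Matrix m m K}
    {N : Matrix n n K} (hM : M.PosDef) (hN : (-N).PosDef) (L : Matrix m n K) :
    (Lᴴ * M⁻¹ * L - N).PosDef := by
  rw [sub_eq_neg_add]
  exact hN.add_posSemidef (hM.inv.posSemidef.conjTranspose_mul_mul_same L)

end Matrix

/-- For `M` positive definite and `N` negative definite, the block matrix
`[[M, L], [Lᵀ, N]]` is invertible and the quadratic form of its inverse is
dominated by `θᵀ M⁻¹ θ`. -/
theorem block_inverse_quad_form_le {m n : ℕ}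
    (M : Matrix (Fin m) (Fin m) ℝ) (L : Matrix (Fin m) (Fin n) ℝ)
    (N : Matrix (Fin n) (Fin n) ℝ)
    (hM : M.PosDef) (hN : (-N).PosDef) :
    IsUnit (Matrix.fromBlocks M L Lᵀ N) ∧
      ∀ (k : ℕ) (θ : Matrix (Fin m) (Fin k) ℝ) (ξ : Matrix (Fin n) (Fin k) ℝ),
        (θᵀ * M⁻¹ * θ -
          Matrix.fromCols θᵀ ξᵀ * (Matrix.fromBlocks M L Lᵀ N)⁻¹ *
            Matrix.fromRows θ ξ).PosSemidef := by
  have hP : (Lᵀ * M⁻¹ * L - N).PosDef := hM.conjTranspose_mul_inv_mul_sub hN L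
  refine ⟨isUnit_fromBlocks_of_isUnit_of_isUnit_sub hM.isUnit hP.isUnit, fun k θ ξ ↦ ?_⟩
  rw [mul_inv_mul_sub_fromCols_mul_inv_fromBlocks_mul_fromRows hM.isUnit hP.isUnit]
  have hMinv : (M⁻¹)ᵀ = M⁻¹ := hM.isHermitian.inv
  have hw : θᵀ * M⁻¹ * L - ξᵀ = (Lᵀ * M⁻¹ * θ - ξ)ᵀ := by
    rw [transpose_sub, transpose_mul, transpose_mul, transpose_transpose, hMinv,
      Matrix.mul_assoc]
  rw [hw]
  exact hP.inv.posSemidef.conjTranspose_mul_mul_same _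
end

section
/- Let N = [[N₁₁, N₁₂], [N₁₂ᵀ, N₂₂]] be a real symmetric block matrix with N₁₁ (size m₁×m₁) symmetric positive definite and N₂₂ (size m₂×m₂) symmetric negative definite, and set Φ = N₂₂ − N₁₂ᵀ N₁₁⁻¹ N₁₂. Let L₁ be a real n×m₁ matrix, L₂ a real n×m₂ matrix, and L = [L₁, L₂] the n×(m₁+m₂) matrix obtained by placing L₁ and L₂ side by side. Then L N⁻¹ Lᵀ − L₁ N₁₁⁻¹ L₁ᵀ = (N₁₂ᵀ N₁₁⁻¹ L₁ᵀ − L₂ᵀ)ᵀ Φ⁻¹ (N₁₂ᵀ N₁₁⁻¹ L₁ᵀ − L₂ᵀ), and this matrix is negative semidefinite. -/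
/-!
The Schur-complement formula for the inverse of `N` (pivoting on the invertible block `N₁₁`)
writes `L N⁻¹ Lᵀ` as `L₁ N₁₁⁻¹ L₁ᵀ` plus a rank-`m₂` correction `Xᵀ Φ⁻¹ X`.
Since `N₁₁⁻¹` is positive definite and `N₂₂` negative definite, the Schur complement
`Φ = N₂₂ - N₁₂ᵀ N₁₁⁻¹ N₁₂` is negative definite, hence so is `Φ⁻¹`, and the congruence
`Xᵀ Φ⁻¹ X` is negative semidefinite.
-/

open Matrix
open scoped ComplexOrder

theorem fromCols_mul_inv_fromBlocks_mul_fromRows_sub {l m n p α : Type*}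
    [Fintype m] [Fintype n] [DecidableEq m] [DecidableEq n] [CommRing α]
    {A : Matrix m m α} {B : Matrix m n α} {C : Matrix n m α} {D : Matrix n n α}
    (hA : IsUnit A) (hS : IsUnit (D - C * A⁻¹ * B))
    (L₁ : Matrix l m α) (L₂ : Matrix l n α) (R₁ : Matrix m p α) (R₂ : Matrix n p α) :
    fromCols L₁ L₂ * (fromBlocks A B C D)⁻¹ * fromRows R₁ R₂ - L₁ * A⁻¹ * R₁ =
      (L₁ * A⁻¹ * B - L₂) * (D - C * A⁻¹ * B)⁻¹ * (C * A⁻¹ * R₁ - R₂) := by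
  have := hA.invertible
  have : Invertible (D - C * ⅟A * B) := by rw [invOf_eq_nonsing_inv]; exact hS.invertible
  have := fromBlocks₁₁Invertible A B C D
  rw [← invOf_eq_nonsing_inv (fromBlocks A B C D), invOf_fromBlocks₁₁_eq,
    fromCols_mul_fromBlocks, fromCols_mul_fromRows]
  simp only [invOf_eq_nonsing_inv, Matrix.sub_mul, Matrix.mul_sub, Matrix.add_mul,
    Matrix.mul_add, Matrix.neg_mul, Matrix.mul_neg, Matrix.mul_assoc]
  abel

section Definiteness

variable {m n 𝕜 : Type*} [Fintype m] [Fintype n] [RCLike 𝕜]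

theorem Matrix.PosDef.posDef_neg_schurComplement [DecidableEq m] {A : Matrix m m 𝕜}
    {D : Matrix n n 𝕜} (hA : A.PosDef) (hD : (-D).PosDef) (B : Matrix m n 𝕜) :
    (-(D - Bᴴ * A⁻¹ * B)).PosDef := by
  rw [neg_sub', sub_neg_eq_add]
  exact hD.add_posSemidef (hA.inv.posSemidef.conjTranspose_mul_mul_same B)

theorem posSemidef_neg_conjTranspose_mul_inv_mul [DecidableEq n] {S : Matrix n n 𝕜}
    (hS : (-S).PosDef) (X : Matrix n m 𝕜) : (-(Xᴴ * S⁻¹ * X)).PosSemidef := by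
  have hS_det : IsUnit S.det := by simpa using (isUnit_iff_isUnit_det _).mp hS.isUnit.neg
  have hinv_neg : (-S)⁻¹ = -S⁻¹ :=
    inv_eq_left_inv (by rw [neg_mul_neg, nonsing_inv_mul _ hS_det])
  have := hS.inv.posSemidef.conjTranspose_mul_mul_same X
  rwa [hinv_neg, Matrix.mul_neg, Matrix.neg_mul] at this

end Definiteness

/-- Difference of quadratic forms in the inverse of a block matrix and in the
inverse of its `(1,1)` block, expressed through the Schur complement; this
difference is negative semidefinite. -/
theorem block_quad_form_diff {m₁ m₂ n : ℕ}
    (N₁₁ : Matrix (Fin m₁) (Fin m₁) ℝ) (N₁₂ : Matrix (Fin m₁) (Fin m₂) ℝ)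
    (N₂₂ : Matrix (Fin m₂) (Fin m₂) ℝ)
    (hN₁₁ : N₁₁.PosDef) (hN₂₂ : (-N₂₂).PosDef)
    (Φ : Matrix (Fin m₂) (Fin m₂) ℝ) (hΦdef : Φ = N₂₂ - N₁₂ᵀ * N₁₁⁻¹ * N₁₂)
    (L₁ : Matrix (Fin n) (Fin m₁) ℝ) (L₂ : Matrix (Fin n) (Fin m₂) ℝ)
    (L : Matrix (Fin n) (Fin m₁ ⊕ Fin m₂) ℝ) (hLdef : L = Matrix.fromCols L₁ L₂)
    (N : Matrix (Fin m₁ ⊕ Fin m₂) (Fin m₁ ⊕ Fin m₂) ℝ)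
    (hNdef : N = Matrix.fromBlocks N₁₁ N₁₂ N₁₂ᵀ N₂₂) :
    L * N⁻¹ * Lᵀ - L₁ * N₁₁⁻¹ * L₁ᵀ =
        (N₁₂ᵀ * N₁₁⁻¹ * L₁ᵀ - L₂ᵀ)ᵀ * Φ⁻¹ * (N₁₂ᵀ * N₁₁⁻¹ * L₁ᵀ - L₂ᵀ) ∧
      (-(L * N⁻¹ * Lᵀ - L₁ * N₁₁⁻¹ * L₁ᵀ)).PosSemidef := by
  have hΦ : (-Φ).PosDef := by
    simpa [hΦdef, conjTranspose_eq_transpose_of_trivial] using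
      hN₁₁.posDef_neg_schurComplement hN₂₂ N₁₂
  have hN₁₁_inv_symm : N₁₁⁻¹ᵀ = N₁₁⁻¹ := by
    simpa [conjTranspose_eq_transpose_of_trivial] using hN₁₁.isHermitian.inv.eq
  have key : L * N⁻¹ * Lᵀ - L₁ * N₁₁⁻¹ * L₁ᵀ =
      (N₁₂ᵀ * N₁₁⁻¹ * L₁ᵀ - L₂ᵀ)ᵀ * Φ⁻¹ * (N₁₂ᵀ * N₁₁⁻¹ * L₁ᵀ - L₂ᵀ) := by
    subst hLdef hNdef hΦdef
    rw [transpose_fromCols, fromCols_mul_inv_fromBlocks_mul_fromRows_sub hN₁₁.isUnit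
      (by simpa using hΦ.isUnit.neg)]
    simp only [transpose_sub, transpose_mul, transpose_transpose, hN₁₁_inv_symm,
      Matrix.mul_assoc]
  refine ⟨key, ?_⟩
  rw [key, ← conjTranspose_eq_transpose_of_trivial]
  exact posSemidef_neg_conjTranspose_mul_inv_mul hΦ _
end

section
/- Fix real matrices B (n×m), C (n×n), D (n×m), S (m×n), and a symmetric m×m matrix R, and for a real symmetric n×n matrix P define L(P) = P B + Cᵀ P D + Sᵀ and N(P) = Dᵀ P D + R. Let K be a set of symmetric n×n matrices and γ > 0 a constant such that for every P ∈ K, N(P) is invertible, ‖N(P)⁻¹‖_F ≤ γ, and ‖L(P)‖_F ≤ γ. Then there exists a constant c ≥ 0, depending only on γ and on the norms of B, C, D, such that for all P, M ∈ K, ‖L(P) N(P)⁻¹ L(P)ᵀ − L(M) N(M)⁻¹ L(M)ᵀ‖_F ≤ c · ‖P − M‖_F; in other words, the map P ↦ L(P) N(P)⁻¹ L(P)ᵀ is Lipschitz continuous on K with respect to the Frobenius norm. -/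
open Matrix

attribute [local instance] Matrix.frobeniusNormedAddCommGroup

/-- Frobenius norm of a real matrix: `‖A‖_F = √(tr(AᵀA))`. -/
noncomputable def frobNorm {m n : ℕ} (A : Matrix (Fin m) (Fin n) ℝ) : ℝ :=
  Real.sqrt (Matrix.trace (Aᵀ * A))

lemma frobNorm_eq_norm {m n : ℕ} (A : Matrix (Fin m) (Fin n) ℝ) : frobNorm A = ‖A‖ := by
  rw [frobNorm, Matrix.frobenius_norm_def, ← Real.sqrt_eq_rpow]
  congr 1
  rw [Matrix.trace, Finset.sum_comm]
  simp [Matrix.diag, Matrix.mul_apply, Real.rpow_two, Real.norm_eq_abs, sq_abs, sq]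

lemma frob_mul3 {p q r s : ℕ} (A : Matrix (Fin p) (Fin q) ℝ) (B : Matrix (Fin q) (Fin r) ℝ)
    (C : Matrix (Fin r) (Fin s) ℝ) : ‖A * B * C‖ ≤ ‖A‖ * ‖B‖ * ‖C‖ :=
  le_trans (Matrix.frobenius_norm_mul _ _)
    (mul_le_mul_of_nonneg_right (Matrix.frobenius_norm_mul _ _) (norm_nonneg _))

lemma mul3_le {x1 x2 x3 y1 y2 y3 : ℝ} (h1 : 0 ≤ x1) (h2 : 0 ≤ x2) (h3 : 0 ≤ x3)
    (g1 : x1 ≤ y1) (g2 : x2 ≤ y2) (g3 : x3 ≤ y3) : x1 * x2 * x3 ≤ y1 * y2 * y3 := by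
  have := h1.trans g1; have := h2.trans g2
  exact mul_le_mul (mul_le_mul g1 g2 h2 ‹0 ≤ y1›) g3 h3 (by positivity)

/-- With `L(P) = P B + Cᵀ P D + Sᵀ` and `N(P) = Dᵀ P D + R`, if on a set `K` of
symmetric matrices the matrices `N(P)` are invertible with `‖N(P)⁻¹‖_F ≤ γ` and
`‖L(P)‖_F ≤ γ`, then `P ↦ L(P) N(P)⁻¹ L(P)ᵀ` is Lipschitz on `K` in the
Frobenius norm, with a constant depending only on `γ` and the data `B, C, D`. -/
theorem lipschitz_riccati_term {n m : ℕ}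
    (B : Matrix (Fin n) (Fin m) ℝ) (C : Matrix (Fin n) (Fin n) ℝ)
    (D : Matrix (Fin n) (Fin m) ℝ) (S : Matrix (Fin m) (Fin n) ℝ)
    (R : Matrix (Fin m) (Fin m) ℝ) (hR : Rᵀ = R) (γ : ℝ) (hγ : 0 < γ) :
    ∃ c : ℝ, 0 ≤ c ∧
      ∀ K : Set (Matrix (Fin n) (Fin n) ℝ),
        (∀ P ∈ K, Pᵀ = P) →
        (∀ P ∈ K, IsUnit (Dᵀ * P * D + R) ∧
          frobNorm (Dᵀ * P * D + R)⁻¹ ≤ γ ∧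
          frobNorm (P * B + Cᵀ * P * D + Sᵀ) ≤ γ) →
        ∀ P ∈ K, ∀ M ∈ K,
          frobNorm
            ((P * B + Cᵀ * P * D + Sᵀ) * (Dᵀ * P * D + R)⁻¹ *
                (P * B + Cᵀ * P * D + Sᵀ)ᵀ -
              (M * B + Cᵀ * M * D + Sᵀ) * (Dᵀ * M * D + R)⁻¹ *
                (M * B + Cᵀ * M * D + Sᵀ)ᵀ) ≤
            c * frobNorm (P - M) := by
  set a : ℝ := ‖B‖ + ‖Cᵀ‖ * ‖D‖ with ha
  have ha0 : 0 ≤ a := by positivity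
  refine ⟨2 * a * γ ^ 2 + γ ^ 4 * (‖Dᵀ‖ * ‖D‖), by positivity, ?_⟩
  intro K hsym hbound P hP M hM
  obtain ⟨hPu, hPN, hPL⟩ := hbound P hP
  obtain ⟨hMu, hMN, hML⟩ := hbound M hM
  rw [frobNorm_eq_norm] at hPN hPL hMN hML ⊢
  rw [frobNorm_eq_norm]
  set LP := P * B + Cᵀ * P * D + Sᵀ with hLP
  set LM := M * B + Cᵀ * M * D + Sᵀ with hLM
  set NP := Dᵀ * P * D + R with hNP
  set NM := Dᵀ * M * D + R with hNM
  set d : ℝ := ‖P - M‖ with hd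
  have hd0 : 0 ≤ d := norm_nonneg _
  -- invertibility facts
  have hPdet : IsUnit NP.det := (Matrix.isUnit_iff_isUnit_det _).mp hPu
  have hMdet : IsUnit NM.det := (Matrix.isUnit_iff_isUnit_det _).mp hMu
  -- difference of L's
  have hLdiff : LP - LM = (P - M) * B + Cᵀ * (P - M) * D := by
    simp only [hLP, hLM, Matrix.sub_mul, Matrix.mul_sub]
    abel
  have hLd : ‖LP - LM‖ ≤ a * d := by
    rw [hLdiff, ha]
    calc ‖(P - M) * B + Cᵀ * (P - M) * D‖
        ≤ ‖(P - M) * B‖ + ‖Cᵀ * (P - M) * D‖ := norm_add_le _ _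
      _ ≤ ‖P - M‖ * ‖B‖ + ‖Cᵀ‖ * ‖P - M‖ * ‖D‖ :=
          add_le_add (Matrix.frobenius_norm_mul _ _) (frob_mul3 _ _ _)
      _ = (‖B‖ + ‖Cᵀ‖ * ‖D‖) * d := by rw [hd]; ring
  -- difference of inverses
  have hNdiff : NP⁻¹ - NM⁻¹ = NP⁻¹ * (Dᵀ * (M - P) * D) * NM⁻¹ := by
    have h1 : Dᵀ * (M - P) * D = NM - NP := by
      simp only [hNP, hNM, Matrix.sub_mul, Matrix.mul_sub]
      abel
    rw [h1, Matrix.mul_sub, Matrix.sub_mul, Matrix.mul_assoc NP⁻¹ NM NM⁻¹,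
      Matrix.mul_nonsing_inv _ hMdet, Matrix.nonsing_inv_mul _ hPdet,
      Matrix.mul_one, Matrix.one_mul]
  have hNd : ‖NP⁻¹ - NM⁻¹‖ ≤ γ ^ 2 * (‖Dᵀ‖ * ‖D‖) * d := by
    rw [hNdiff]
    calc ‖NP⁻¹ * (Dᵀ * (M - P) * D) * NM⁻¹‖
        ≤ ‖NP⁻¹‖ * ‖Dᵀ * (M - P) * D‖ * ‖NM⁻¹‖ := frob_mul3 _ _ _
      _ ≤ γ * (‖Dᵀ‖ * ‖M - P‖ * ‖D‖) * γ :=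
          mul3_le (norm_nonneg _) (norm_nonneg _) (norm_nonneg _)
            hPN (frob_mul3 _ _ _) hMN
      _ = γ ^ 2 * (‖Dᵀ‖ * ‖D‖) * d := by rw [hd, norm_sub_rev]; ring
  -- key decomposition
  have key : LP * NP⁻¹ * LPᵀ - LM * NM⁻¹ * LMᵀ =
      (LP - LM) * NP⁻¹ * LPᵀ + LM * (NP⁻¹ - NM⁻¹) * LPᵀ + LM * NM⁻¹ * (LP - LM)ᵀ := by
    simp only [Matrix.sub_mul, Matrix.mul_sub, Matrix.transpose_sub]
    abel
  rw [key]
  calc ‖(LP - LM) * NP⁻¹ * LPᵀ + LM * (NP⁻¹ - NM⁻¹) * LPᵀ + LM * NM⁻¹ * (LP - LM)ᵀ‖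
      ≤ ‖(LP - LM) * NP⁻¹ * LPᵀ‖ + ‖LM * (NP⁻¹ - NM⁻¹) * LPᵀ‖ + ‖LM * NM⁻¹ * (LP - LM)ᵀ‖ :=
        norm_add₃_le
    _ ≤ ‖LP - LM‖ * ‖NP⁻¹‖ * ‖LPᵀ‖ + ‖LM‖ * ‖NP⁻¹ - NM⁻¹‖ * ‖LPᵀ‖ +
          ‖LM‖ * ‖NM⁻¹‖ * ‖(LP - LM)ᵀ‖ :=
        add_le_add (add_le_add (frob_mul3 _ _ _) (frob_mul3 _ _ _)) (frob_mul3 _ _ _)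
    _ ≤ (a * d) * γ * γ + γ * (γ ^ 2 * (‖Dᵀ‖ * ‖D‖) * d) * γ + γ * γ * (a * d) := by
        rw [Matrix.frobenius_norm_transpose, Matrix.frobenius_norm_transpose]
        exact add_le_add (add_le_add
          (mul3_le (norm_nonneg _) (norm_nonneg _) (norm_nonneg _) hLd hPN hPL)
          (mul3_le (norm_nonneg _) (norm_nonneg _) (norm_nonneg _) hML hNd hPL))
          (mul3_le (norm_nonneg _) (norm_nonneg _) (norm_nonneg _) hML hMN hLd)
    _ = (2 * a * γ ^ 2 + γ ^ 4 * (‖Dᵀ‖ * ‖D‖)) * d := by ring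
end
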